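/- arXiv:1304.6301 — 2 statements merged into one kernel-verified Lean document; each statement's English description precedes it below -/
import Mathlib

section
/- Let Σ be a finite alphabet, N ≥ 1 a natural number, w1 ∈ Σ* a finite word, s ∈ Σ^+ a nonempty finite word, w2 an ω-word over Σ, and M a natural number with M > 2^{N+1}. Then w1·s^M·w2 ≡_N w1·s^{M+1}·w2, i.e., the two ω-words satisfy exactly the same FO_Σ sentences of quantifier height at most N. -/
namespace Stmt0

variable {Γ : Type*}

/-- `m`-fold concatenation of a finite word. -/
def lpow (u : List Γ) : ℕ → List Γ
  | 0 => []
  | m + 1 => u ++ lpow u m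

/-- Concatenation of a finite word with an ω-word. -/
def wcat (u : List Γ) (w : ℕ → Γ) : ℕ → Γ := fun n =>
  if h : n < u.length then u.get ⟨n, h⟩ else w (n - u.length)

/-- Syntax of first-order logic `FO_Γ` over ω-words over `Γ`:
variables are natural numbers (interpreted as positions), atomic formulas are
`a(z)` for each letter `a`, `S(z,z')`, `z < z'` and `z = z'`,
closed under `¬`, `∧` and `∃`. -/
inductive FO (Γ : Type*) : Type _
  | letter : Γ → ℕ → FO Γ
  | succ : ℕ → ℕ → FO Γ
  | lt : ℕ → ℕ → FO Γ
  | eq : ℕ → ℕ → FO Γ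
  | not : FO Γ → FO Γ
  | and : FO Γ → FO Γ → FO Γ
  | ex : ℕ → FO Γ → FO Γ

/-- Satisfaction of an FO formula on an ω-word under an assignment of variables
to positions. -/
def FO.Sat (w : ℕ → Γ) : FO Γ → (ℕ → ℕ) → Prop
  | .letter a z, f => w (f z) = a
  | .succ z z', f => f z' = f z + 1
  | .lt z z', f => f z < f z'
  | .eq z z', f => f z = f z'
  | .not φ, f => ¬ FO.Sat w φ f
  | .and φ ψ, f => FO.Sat w φ f ∧ FO.Sat w ψ f
  | .ex z φ, f => ∃ pos : ℕ, FO.Sat w φ (Function.update f z pos)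

/-- Quantifier height: maximal nesting depth of `∃`. -/
def FO.qh : FO Γ → ℕ
  | .letter _ _ => 0
  | .succ _ _ => 0
  | .lt _ _ => 0
  | .eq _ _ => 0
  | .not φ => FO.qh φ
  | .and φ ψ => max (FO.qh φ) (FO.qh ψ)
  | .ex _ φ => FO.qh φ + 1

/-- Free variables of an FO formula. -/
def FO.free : FO Γ → Finset ℕ
  | .letter _ z => {z}
  | .succ z z' => {z, z'}
  | .lt z z' => {z, z'}
  | .eq z z' => {z, z'}
  | .not φ => FO.free φ
  | .and φ ψ => FO.free φ ∪ FO.free ψ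
  | .ex z φ => (FO.free φ).erase z

/-- Satisfaction of a sentence (the assignment is irrelevant, so we fix one). -/
def FO.SatS (w : ℕ → Γ) (φ : FO Γ) : Prop := FO.Sat w φ fun _ => 0

/-- `w ≡_n w'`: the two ω-words satisfy exactly the same FO sentences
of quantifier height at most `n`. -/
def FOEquiv (n : ℕ) (w w' : ℕ → Γ) : Prop :=
  ∀ φ : FO Γ, FO.free φ = ∅ → FO.qh φ ≤ n → (FO.SatS w φ ↔ FO.SatS w' φ)

/-!
Ehrenfeucht–Fraïssé argument. Write `A` and `B` for the two words, `L = |w1|`, `p = |s|` and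
`R = L + p * M`: the words agree below `R`, and `A n = B (n + p)` from `L` on. Duplicator answers a
position either by itself (if it lies well before `R`) or by its shift by `p` (if it lies well
after `L`), keeping positions answered in the two ways at distance `d` apart. One round costs a
factor two in `d`, so `N` rounds need a window `R - L` of size about `p * 2 ^ N`.
-/

open Function

variable {A B : ℕ → Γ}

structure IsPartialIso (A B : ℕ → Γ) (f g : ℕ → ℕ) : Prop where
  letter : ∀ z, A (f z) = B (g z)
  succ_iff : ∀ z z', f z' = f z + 1 ↔ g z' = g z + 1
  lt_iff : ∀ z z', f z < f z' ↔ g z < g z'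

theorem IsPartialIso.eq_iff {f g : ℕ → ℕ} (h : IsPartialIso A B f g) (z z' : ℕ) :
    f z = f z' ↔ g z = g z' := by
  have := h.lt_iff z z'
  have := h.lt_iff z' z
  omega

structure IsBackForth (A B : ℕ → Γ) (Rel : ℕ → (ℕ → ℕ) → (ℕ → ℕ) → Prop) : Prop where
  partialIso : ∀ {k f g}, Rel k f g → IsPartialIso A B f g
  forth : ∀ {k f g}, Rel (k + 1) f g → ∀ z x, ∃ y, Rel k (update f z x) (update g z y)
  back : ∀ {k f g}, Rel (k + 1) f g → ∀ z y, ∃ x, Rel k (update f z x) (update g z y)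

theorem IsBackForth.sat_iff {Rel : ℕ → (ℕ → ℕ) → (ℕ → ℕ) → Prop} (h : IsBackForth A B Rel)
    (φ : FO Γ) {k : ℕ} {f g : ℕ → ℕ} (hφ : φ.qh ≤ k) (hfg : Rel k f g) :
    φ.Sat A f ↔ φ.Sat B g := by
  induction φ generalizing k f g with
  | letter a z => simp only [FO.Sat, (h.partialIso hfg).letter z]
  | succ z z' => exact (h.partialIso hfg).succ_iff z z'
  | lt z z' => exact (h.partialIso hfg).lt_iff z z'
  | eq z z' => exact (h.partialIso hfg).eq_iff z z'
  | not φ ih => exact not_congr (ih hφ hfg)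
  | and φ ψ ihφ ihψ =>
    rw [FO.qh, max_le_iff] at hφ
    exact and_congr (ihφ hφ.1 hfg) (ihψ hφ.2 hfg)
  | ex z φ ih =>
    obtain ⟨j, rfl⟩ : ∃ j, k = j + 1 := ⟨k - 1, by rw [FO.qh] at hφ; omega⟩
    have hφ : φ.qh ≤ j := by rw [FO.qh] at hφ; omega
    constructor
    · rintro ⟨x, hx⟩
      obtain ⟨y, hxy⟩ := h.forth hfg z x
      exact ⟨y, (ih hφ hxy).1 hx⟩
    · rintro ⟨y, hy⟩
      obtain ⟨x, hxy⟩ := h.back hfg z y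
      exact ⟨x, (ih hφ hxy).2 hy⟩

theorem IsBackForth.foEquiv {Rel : ℕ → (ℕ → ℕ) → (ℕ → ℕ) → Prop} (h : IsBackForth A B Rel)
    {n : ℕ} (hn : Rel n (fun _ => 0) (fun _ => 0)) : FOEquiv n A B :=
  fun φ _ hφ => h.sat_iff φ hφ hn

section Aligned

variable {L R p d d' : ℕ} {f g : ℕ → ℕ}

def Aligned (L R p d : ℕ) (f g : ℕ → ℕ) : Prop :=
  (∀ z, (g z = f z ∧ f z + d ≤ R) ∨ (g z = f z + p ∧ L + d ≤ f z)) ∧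
  ∀ z z', g z = f z → g z' = f z' + p → f z + d ≤ f z' ∨ f z' + p + d ≤ f z

theorem Aligned.mono (h : Aligned L R p d' f g) (hd : d ≤ d') : Aligned L R p d f g :=
  ⟨fun z => by have := h.1 z; omega, fun z z' hz hz' => by have := h.2 z z' hz hz'; omega⟩

theorem Aligned.isPartialIso (hagree : ∀ n < R, A n = B n) (hshift : ∀ n, L ≤ n → A n = B (n + p))
    (hd : 2 ≤ d) (h : Aligned L R p d f g) : IsPartialIso A B f g where
  letter z := by
    rcases h.1 z with ⟨hz, hzR⟩ | ⟨hz, hzL⟩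
    · rw [hz]; exact hagree _ (by omega)
    · rw [hz]; exact hshift _ (by omega)
  succ_iff z z' := by
    have := h.2 z z'; have := h.2 z' z
    rcases h.1 z with hz | hz <;> rcases h.1 z' with hz' | hz' <;> omega
  lt_iff z z' := by
    have := h.2 z z'; have := h.2 z' z
    rcases h.1 z with hz | hz <;> rcases h.1 z' with hz' | hz' <;> omega

theorem Aligned.extend (hp : 0 < p) (h : Aligned L R p d f g) (z₀ : ℕ) {x y : ℕ}
    (hxy : (y = x ∧ x + d ≤ R) ∨ (y = x + p ∧ L + d ≤ x))
    (hsame : y = x → ∀ z, g z = f z + p → x + d ≤ f z ∨ f z + p + d ≤ x)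
    (hshifted : y = x + p → ∀ z, g z = f z → f z + d ≤ x ∨ x + p + d ≤ f z) :
    Aligned L R p d (update f z₀ x) (update g z₀ y) := by
  refine ⟨fun z => ?_, fun z z' hz hz' => ?_⟩
  · rcases eq_or_ne z z₀ with rfl | hne
    · simpa using hxy
    · simpa [hne] using h.1 z
  · by_cases hz₀ : z = z₀ <;> by_cases hz₀' : z' = z₀
    · subst hz₀ hz₀'; simp only [update_self] at hz hz'; omega
    · subst hz₀; simp only [update_self, update_of_ne hz₀'] at hz hz' ⊢
      exact hsame hz z' hz'
    · subst hz₀'; simp only [update_self, update_of_ne hz₀] at hz hz' ⊢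
      exact hshifted hz' z hz
    · simp only [update_of_ne hz₀, update_of_ne hz₀'] at hz hz' ⊢
      exact h.2 z z' hz hz'

/-- A new position is answered by its shift unless it is too far left or close to a position
answered identically; in that case `d' ≥ 2 d + p - 1` keeps it `d` away from all shifted ones. -/
theorem Aligned.exists_forth (hp : 0 < p) (hd : 2 * d + p ≤ d' + 1) (hR : L + d' ≤ R)
    (h : Aligned L R p d' f g) (z₀ x : ℕ) :
    ∃ y, Aligned L R p d (update f z₀ x) (update g z₀ y) := by
  have h' := h.mono (by omega : d ≤ d')
  by_cases hshift : L + d ≤ x ∧ ∀ z, g z = f z → f z + d ≤ x ∨ x + p + d ≤ f z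
  · exact ⟨x + p, h'.extend hp z₀ (.inr ⟨rfl, hshift.1⟩) (fun _ => by omega)
      fun _ => hshift.2⟩
  · have hsame : x + d ≤ R ∧ ∀ z, g z = f z + p → x + d ≤ f z ∨ f z + p + d ≤ x := by
      rw [not_and_or] at hshift
      push Not at hshift
      rcases hshift with hx | ⟨z₁, hz₁, hx₁, hx₁'⟩
      · refine ⟨by omega, fun z hz => ?_⟩
        rcases h.1 z with hz' | hz' <;> omega
      · have := h.1 z₁
        refine ⟨by omega, fun z hz => ?_⟩
        have := h.2 z₁ z hz₁ hz
        omega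
    exact ⟨x, h'.extend hp z₀ (.inl ⟨rfl, hsame.1⟩) (fun _ => hsame.2) (fun _ => by omega)⟩

theorem Aligned.exists_back (hp : 0 < p) (hd : 2 * d + p ≤ d' + 1) (hR : L + d' ≤ R)
    (h : Aligned L R p d' f g) (z₀ y : ℕ) :
    ∃ x, Aligned L R p d (update f z₀ x) (update g z₀ y) := by
  have h' := h.mono (by omega : d ≤ d')
  by_cases hshift : L + d + p ≤ y ∧ ∀ z, g z = f z → f z + d + p ≤ y ∨ y + d ≤ f z
  · obtain ⟨x, rfl⟩ : ∃ x, y = x + p := ⟨y - p, by omega⟩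
    refine ⟨x, ?_⟩
    refine h'.extend hp z₀ (.inr ⟨rfl, by omega⟩) (fun _ => by omega) fun _ z hz => ?_
    have := hshift.2 z hz
    omega
  · have hsame : y + d ≤ R ∧ ∀ z, g z = f z + p → y + d ≤ f z ∨ f z + p + d ≤ y := by
      rw [not_and_or] at hshift
      push Not at hshift
      rcases hshift with hy | ⟨z₁, hz₁, hy₁, hy₁'⟩
      · refine ⟨by omega, fun z hz => ?_⟩
        rcases h.1 z with hz' | hz' <;> omega
      · have := h.1 z₁
        refine ⟨by omega, fun z hz => ?_⟩
        have := h.2 z₁ z hz₁ hz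
        omega
    exact ⟨y, h'.extend hp z₀ (.inl ⟨rfl, hsame.1⟩) (fun _ => hsame.2) (fun _ => by omega)⟩

end Aligned

def gapBound (p : ℕ) : ℕ → ℕ
  | 0 => 2
  | k + 1 => 2 * gapBound p k + p - 1

theorem two_le_gapBound (p : ℕ) : ∀ k, 2 ≤ gapBound p k
  | 0 => le_rfl
  | k + 1 => by have := two_le_gapBound p k; simp only [gapBound]; omega

theorem gapBound_add_self (p : ℕ) : ∀ k, gapBound p k + p = (p + 1) * 2 ^ k + 1
  | 0 => by simp only [gapBound, pow_zero]; omega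
  | k + 1 => by
    have := gapBound_add_self p k
    have := two_le_gapBound p k
    have : (p + 1) * 2 ^ (k + 1) = 2 * ((p + 1) * 2 ^ k) := by ring
    simp only [gapBound]
    omega

theorem gapBound_le_mul {p N M : ℕ} (hp : 0 < p) (hM : 2 ^ (N + 1) < M) : gapBound p N ≤ p * M := by
  have := gapBound_add_self p N
  have : p * (2 ^ (N + 1) + 1) ≤ p * M := Nat.mul_le_mul_left p hM
  rw [pow_succ] at this
  nlinarith [Nat.one_le_two_pow (n := N)]

theorem isBackForth_aligned {L R p : ℕ} (hp : 0 < p) (hagree : ∀ n < R, A n = B n)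
    (hshift : ∀ n, L ≤ n → A n = B (n + p)) :
    IsBackForth A B fun k f g => L + gapBound p k ≤ R ∧ Aligned L R p (gapBound p k) f g where
  partialIso h := h.2.isPartialIso hagree hshift (two_le_gapBound p _)
  forth {k} _ _ h z x := by
    have := two_le_gapBound p k
    have hd : 2 * gapBound p k + p ≤ gapBound p (k + 1) + 1 := by simp only [gapBound]; omega
    obtain ⟨y, hy⟩ := h.2.exists_forth hp hd h.1 z x
    exact ⟨y, by omega, hy⟩
  back {k} _ _ h z y := by
    have := two_le_gapBound p k
    have hd : 2 * gapBound p k + p ≤ gapBound p (k + 1) + 1 := by simp only [gapBound]; omega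
    obtain ⟨x, hx⟩ := h.2.exists_back hp hd h.1 z y
    exact ⟨x, by omega, hx⟩

theorem foEquiv_of_agree_of_shift {L R p N : ℕ} (hp : 0 < p) (hagree : ∀ n < R, A n = B n)
    (hshift : ∀ n, L ≤ n → A n = B (n + p)) (hN : L + gapBound p N ≤ R) : FOEquiv N A B :=
  (isBackForth_aligned hp hagree hshift).foEquiv
    ⟨hN, fun _ => .inl ⟨rfl, by dsimp only; omega⟩, fun _ _ _ h => by omega⟩

theorem wcat_of_lt {u : List Γ} {w : ℕ → Γ} {n : ℕ} (h : n < u.length) :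
    wcat u w n = u[n] := by
  simp [wcat, h]

theorem wcat_of_le {u : List Γ} {w : ℕ → Γ} {n : ℕ} (h : u.length ≤ n) :
    wcat u w n = w (n - u.length) := by
  simp [wcat, not_lt.2 h]

theorem wcat_congr_of_lt {u : List Γ} {w w' : ℕ → Γ} {n : ℕ} (h : n < u.length) :
    wcat u w n = wcat u w' n := by
  rw [wcat_of_lt h, wcat_of_lt h]

theorem wcat_append (u v : List Γ) (w : ℕ → Γ) : wcat (u ++ v) w = wcat u (wcat v w) := by
  funext n
  rcases lt_or_ge n u.length with h | h
  · rw [wcat_of_lt (by rw [List.length_append]; omega), wcat_of_lt h, List.getElem_append_left h]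
  rw [wcat_of_le h]
  rcases lt_or_ge n (u.length + v.length) with h' | h'
  · rw [wcat_of_lt (by rw [List.length_append]; omega), wcat_of_lt (by omega),
      List.getElem_append_right h]
  · rw [wcat_of_le (by rw [List.length_append]; omega), wcat_of_le (by omega), List.length_append,
      Nat.sub_sub]

theorem length_lpow (u : List Γ) : ∀ m, (lpow u m).length = u.length * m
  | 0 => rfl
  | m + 1 => by simp [lpow, length_lpow u m, Nat.mul_succ, Nat.add_comm]

theorem lpow_succ' (u : List Γ) : ∀ m, lpow u (m + 1) = lpow u m ++ u
  | 0 => by simp [lpow]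
  | m + 1 => by
    change u ++ lpow u (m + 1) = (u ++ lpow u m) ++ u
    rw [lpow_succ' u m, List.append_assoc]

theorem stuttering_fo_general {Γ : Type*} (N : ℕ)
    (w1 s : List Γ) (hs : s ≠ []) (w2 : ℕ → Γ) (M : ℕ) (hM : 2 ^ (N + 1) < M) :
    FOEquiv N (wcat (w1 ++ lpow s M) w2) (wcat (w1 ++ lpow s (M + 1)) w2) := by
  have hp : 0 < s.length := List.length_pos_iff.2 hs
  refine foEquiv_of_agree_of_shift (L := w1.length) (R := w1.length + s.length * M) hp
    (fun n hn => ?_) (fun n hn => ?_) (by have := gapBound_le_mul hp hM; omega)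
  · rw [lpow_succ', ← List.append_assoc, wcat_append (w1 ++ lpow s M)]
    exact wcat_congr_of_lt (by simp only [List.length_append, length_lpow]; omega)
  · have hB : w1 ++ lpow s (M + 1) = (w1 ++ s) ++ lpow s M := (List.append_assoc ..).symm
    rw [hB, wcat_append, wcat_append (w1 ++ s), wcat_of_le hn,
      wcat_of_le (u := w1 ++ s) (by simp only [List.length_append]; omega), List.length_append]
    congr 1
    omega

/-- Stuttering theorem for FO: if `M > 2^(N+1)` then
`w1 · s^M · w2 ≡_N w1 · s^(M+1) · w2`. -/
theorem stuttering_fo {Γ : Type*} [Fintype Γ] (N : ℕ) (hN : 1 ≤ N)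
    (w1 s : List Γ) (hs : s ≠ []) (w2 : ℕ → Γ) (M : ℕ) (hM : 2 ^ (N + 1) < M) :
    FOEquiv N (wcat (w1 ++ lpow s M) w2) (wcat (w1 ++ lpow s (M + 1)) w2) :=
  stuttering_fo_general N w1 s hs w2 M hM

end Stmt0
end

section
/- Let A = (Q, {a}, δ, q0, F) be an alternating finite automaton over the singleton alphabet {a} with q0 ∉ F. Define A' = (Q ∪ {q0ⁿ, qfⁿ}, {a}, δ', q0ⁿ, {qfⁿ}), where q0ⁿ and qfⁿ are fresh states, δ'(q0ⁿ, a) = q0, δ'(qfⁿ, a) = ⊥, and for q ∈ Q: δ'(q, a) = q ∨ qfⁿ if δ(q, a) = ⊤, and otherwise δ'(q, a) is δ(q, a) with every occurrence of every q_f ∈ F simultaneously replaced by (q_f ∨ qfⁿ). Then L(A') = { a·w : w ∈ L(A) }; moreover the initial state q0ⁿ of A' is not accepting and the transition of its accepting state qfⁿ is ⊥. -/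
namespace Stmt10

open scoped Classical

/-- Positive Boolean formulas over `Q`. -/
inductive PosBool (Q : Type*) : Type _
  | tru : PosBool Q
  | fls : PosBool Q
  | var : Q → PosBool Q
  | and : PosBool Q → PosBool Q → PosBool Q
  | or : PosBool Q → PosBool Q → PosBool Q

/-- Evaluation of a positive Boolean formula under a valuation. -/
def PosBool.eval {Q : Type*} (v : Q → Prop) : PosBool Q → Prop
  | .tru => True
  | .fls => False
  | .var q => v q
  | .and x y => PosBool.eval v x ∧ PosBool.eval v y
  | .or x y => PosBool.eval v x ∨ PosBool.eval v y

/-- Simultaneous substitution of formulas for variables. -/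
def PosBool.subst {Q Q' : Type*} (g : Q → PosBool Q') : PosBool Q → PosBool Q'
  | .tru => .tru
  | .fls => .fls
  | .var q => g q
  | .and x y => .and (PosBool.subst g x) (PosBool.subst g y)
  | .or x y => .or (PosBool.subst g x) (PosBool.subst g y)

/-- An alternating finite automaton over the alphabet `A`. -/
structure AFA (Q A : Type*) where
  init : Q
  delta : Q → A → PosBool Q
  acc : Set Q

/-- The acceptance predicate: `AccFrom M w q` iff `M` accepts the finite word
`w` starting from state `q`. -/
def AFA.AccFrom {Q A : Type*} (M : AFA Q A) : List A → Q → Prop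
  | [], q => q ∈ M.acc
  | a :: w, q => PosBool.eval (fun q' => AFA.AccFrom M w q') (M.delta q a)

/-- The language of an AFA. -/
def AFA.lang {Q A : Type*} (M : AFA Q A) : Set (List A) := {w | M.AccFrom w M.init}

/-- The modified automaton `A'` over the singleton alphabet: two fresh states
`q0ⁿ = Sum.inr true` (new initial state) and `qfⁿ = Sum.inr false` (sole
accepting state, with transition `⊥`); `δ'(q0ⁿ, a) = q0`; for `q ∈ Q`,
`δ'(q, a) = q ∨ qfⁿ` if `δ(q, a) = ⊤`, and otherwise `δ'(q, a)` is `δ(q, a)`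
with every occurrence of every `q_f ∈ F` replaced by `(q_f ∨ qfⁿ)`. -/
noncomputable def afaPrime {Q : Type*} (M : AFA Q Unit) : AFA (Q ⊕ Bool) Unit where
  init := Sum.inr true
  acc := {Sum.inr false}
  delta := fun q' _ =>
    match q' with
    | Sum.inr true => PosBool.var (Sum.inl M.init)
    | Sum.inr false => PosBool.fls
    | Sum.inl q =>
      if M.delta q () = PosBool.tru then
        PosBool.or (PosBool.var (Sum.inl q)) (PosBool.var (Sum.inr false))
      else
        PosBool.subst
          (fun qf =>
            if qf ∈ M.acc then
              PosBool.or (PosBool.var (Sum.inl qf)) (PosBool.var (Sum.inr false))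
            else PosBool.var (Sum.inl qf))
          (M.delta q ())

lemma PosBool.eval_congr {Q : Type*} {v v' : Q → Prop} (h : ∀ q, v q ↔ v' q) (φ : PosBool Q) :
    φ.eval v ↔ φ.eval v' := by
  induction φ <;> simp only [PosBool.eval, *]

lemma PosBool.eval_subst {Q Q' : Type*} (g : Q → PosBool Q') (v : Q' → Prop) (φ : PosBool Q) :
    (φ.subst g).eval v ↔ φ.eval fun q => (g q).eval v := by
  induction φ <;> simp only [PosBool.subst, PosBool.eval, *]

section afaPrime

variable {Q : Type*} (M : AFA Q Unit)

lemma afaPrime_delta_inl (q : Q) :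
    (afaPrime M).delta (.inl q) () =
      if M.delta q () = .tru then .or (.var (.inl q)) (.var (.inr false))
      else (M.delta q ()).subst fun qf =>
        if qf ∈ M.acc then .or (.var (.inl qf)) (.var (.inr false)) else .var (.inl qf) :=
  rfl

lemma afaPrime_accFrom_inr_false (w : List Unit) :
    (afaPrime M).AccFrom w (.inr false) ↔ w = [] := by
  cases w <;> simp [AFA.AccFrom, afaPrime, PosBool.eval]

/-- No state of `Q` accepts in `A'`; on the last letter the disjunct `qfⁿ` attached to each
`q_f ∈ F` takes the place of its acceptance. -/
theorem afaPrime_accFrom_inl_or_iff (w : List Unit) (q : Q) :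
    (afaPrime M).AccFrom w (.inl q) ∨ (w = [] ∧ q ∈ M.acc) ↔ M.AccFrom w q := by
  induction w generalizing q with
  | nil => simp [AFA.AccFrom, afaPrime]
  | cons a w ih =>
    obtain rfl : a = () := rfl
    have hacc : ∀ q, (afaPrime M).AccFrom (() :: w) (.inl q) ↔
        ((afaPrime M).delta (.inl q) ()).eval fun q' => (afaPrime M).AccFrom w q' := fun _ => .rfl
    simp only [reduceCtorEq, false_and, or_false, hacc, afaPrime_delta_inl]
    split_ifs with htru
    · simp only [AFA.AccFrom, htru, PosBool.eval, afaPrime_accFrom_inr_false, iff_true]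
      rcases w with _ | ⟨⟨⟩, w⟩
      · exact .inr rfl
      · refine .inl (((ih q).mpr ?_).resolve_right (by simp))
        simp [AFA.AccFrom, htru, PosBool.eval]
    · rw [PosBool.eval_subst, AFA.AccFrom]
      refine PosBool.eval_congr (fun qf => ?_) _
      rw [← ih qf]
      split_ifs with hf <;> simp [PosBool.eval, afaPrime_accFrom_inr_false, hf]

end afaPrime

theorem afaPrime_lang_general {Q : Type*} (M : AFA Q Unit)
    (h0 : M.init ∉ M.acc) :
    (afaPrime M).lang = {w | ∃ w', w = () :: w' ∧ w' ∈ M.lang} ∧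
      (afaPrime M).init ∉ (afaPrime M).acc ∧
      (afaPrime M).delta (Sum.inr false) () = PosBool.fls := by
  refine ⟨?_, by simp [afaPrime], rfl⟩
  ext w
  rcases w with _ | ⟨⟨⟩, w⟩
  · simp [AFA.lang, AFA.AccFrom, afaPrime]
  · have hinit : (afaPrime M).AccFrom (() :: w) (afaPrime M).init ↔
        (afaPrime M).AccFrom w (.inl M.init) := .rfl
    simp only [AFA.lang, Set.mem_ofPred, hinit, List.cons.injEq, true_and, exists_eq_left']
    rw [← afaPrime_accFrom_inl_or_iff M]
    simp [h0]

/-- If `q0 ∉ F` then `L(A') = { a·w : w ∈ L(A) }`; moreover the initial state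
of `A'` is not accepting and the transition of its accepting state is `⊥`. -/
theorem afaPrime_lang {Q : Type*} [Fintype Q] (M : AFA Q Unit)
    (h0 : M.init ∉ M.acc) :
    (afaPrime M).lang = {w | ∃ w', w = () :: w' ∧ w' ∈ M.lang} ∧
      (afaPrime M).init ∉ (afaPrime M).acc ∧
      (afaPrime M).delta (Sum.inr false) () = PosBool.fls :=
  afaPrime_lang_general M h0

end Stmt10
end
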